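/- Adding a potential-based shaping term changes the discounted return of every infinite trajectory by exactly −Φ(s₀). Consequently, for two policies generating trajectory distributions with the same initial state s₀, the difference of shaped expected returns equals the difference of original expected returns; hence a policy maximizes shaped return if and only if it maximizes the original return. -/

import Mathlib

/-! Writing `g t = γ ^ t * Φ (s t)`, the discounted shaping term `γ ^ t * (γ Φ(s_{t+1}) - Φ(s_t))`
is `g (t + 1) - g t`, so its series telescopes to `lim g - g 0 = -Φ s₀`, the limit being `0`
because `Φ` is bounded and `γ < 1`. Every shaped return is thus the original one shifted by the
same constant, and a shift common to all trajectories survives averaging against any probability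
weights unchanged, so it cancels from every comparison of policies. -/

open Filter Topology

theorem eq_neg_of_hasSum_sub_of_tendsto_zero {G : Type*} [AddCommGroup G] [TopologicalSpace G]
    [IsTopologicalAddGroup G] [T2Space G] {g : ℕ → G} {a : G}
    (h : HasSum (fun t => g (t + 1) - g t) a) (hg : Tendsto g atTop (𝓝 0)) : a = -g 0 := by
  have hpartial :
      Tendsto (fun N => ∑ t ∈ Finset.range N, (g (t + 1) - g t)) atTop (𝓝 (0 - g 0)) := by
    simpa only [Finset.sum_range_sub] using hg.sub_const (g 0)
  simpa using tendsto_nhds_unique h.tendsto_sum_nat hpartial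

theorem tendsto_pow_mul_atTop_nhds_zero_of_bounded {γ C : ℝ} (hγ : |γ| < 1) {f : ℕ → ℝ}
    (hf : ∀ t, |f t| ≤ C) : Tendsto (fun t => γ ^ t * f t) atTop (𝓝 0) :=
  (tendsto_pow_atTop_nhds_zero_of_abs_lt_one hγ).zero_mul_isBoundedUnder_le
    ⟨C, eventually_map.2 (Eventually.of_forall hf)⟩

def shapedReward {S : Type*} (γ : ℝ) (Φ : S → ℝ) (R : ℕ → ℝ) (s : ℕ → S) (t : ℕ) : ℝ :=
  R t + γ * Φ (s (t + 1)) - Φ (s t)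

theorem shaped_return_eq {S : Type*} {γ C : ℝ} (hγ : |γ| < 1) {Φ : S → ℝ} {s : ℕ → S}
    (hΦ : ∀ t, |Φ (s t)| ≤ C) {R : ℕ → ℝ} {J Jsh : ℝ}
    (hJ : HasSum (fun t => γ ^ t * R t) J)
    (hJsh : HasSum (fun t => γ ^ t * shapedReward γ Φ R s t) Jsh) :
    Jsh = J - Φ (s 0) := by
  set g : ℕ → ℝ := fun t => γ ^ t * Φ (s t)
  have hdiff : HasSum (fun t => g (t + 1) - g t) (Jsh - J) := by
    have hterm : (fun t => g (t + 1) - g t) =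
        fun t => γ ^ t * shapedReward γ Φ R s t - γ ^ t * R t := by
      funext t
      simp only [g, shapedReward]
      ring
    exact hterm ▸ hJsh.sub hJ
  have hlimit := eq_neg_of_hasSum_sub_of_tendsto_zero hdiff
    (tendsto_pow_mul_atTop_nhds_zero_of_bounded hγ hΦ)
  simp only [g, pow_zero, one_mul] at hlimit
  linarith

theorem Finset.sum_mul_sub_const {ι R : Type*} [CommRing R] (s : Finset ι) {w : ι → R}
    (hw : ∑ i ∈ s, w i = 1) (x : ι → R) (c : R) :
    ∑ i ∈ s, w i * (x i - c) = ∑ i ∈ s, w i * x i - c := by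
  simp only [mul_sub, Finset.sum_sub_distrib, ← Finset.sum_mul, hw, one_mul]

theorem pbrs_policy_invariance_general {S : Type*} (n : ℕ) (γ Φmax : ℝ)
    (hγ : γ ∈ Set.Ioo (0:ℝ) 1)
    (Φ : S → ℝ) (hΦ : ∀ x, |Φ x| ≤ Φmax)
    (s : Fin n → ℕ → S) (R : Fin n → ℕ → ℝ)
    (s₀ : S) (hs₀ : ∀ i, s i 0 = s₀)
    (J Jsh : Fin n → ℝ)
    (hJ : ∀ i, HasSum (fun t : ℕ => γ ^ t * R i t) (J i))
    (hJsh : ∀ i, HasSum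
      (fun t : ℕ => γ ^ t * (R i t + γ * Φ (s i (t + 1)) - Φ (s i t))) (Jsh i)) :
    (∀ i, Jsh i = J i - Φ s₀) ∧
    (∀ w w' : Fin n → ℝ, (∀ i, 0 ≤ w i) → (∀ i, 0 ≤ w' i) →
      (∑ i, w i) = 1 → (∑ i, w' i) = 1 →
      ((∑ i, w i * Jsh i) - (∑ i, w' i * Jsh i) =
        (∑ i, w i * J i) - (∑ i, w' i * J i)) ∧
      ((∑ i, w' i * Jsh i ≤ ∑ i, w i * Jsh i) ↔
        (∑ i, w' i * J i ≤ ∑ i, w i * J i))) := by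
  have hγ' : |γ| < 1 := abs_lt.2 ⟨by linarith [hγ.1], hγ.2⟩
  have hshift : ∀ i, Jsh i = J i - Φ s₀ := fun i => by
    rw [← hs₀ i]
    exact shaped_return_eq hγ' (fun t => hΦ _) (hJ i) (hJsh i)
  refine ⟨hshift, fun w w' _ _ hw hw' => ?_⟩
  simp only [hshift, Finset.sum_mul_sub_const _ hw, Finset.sum_mul_sub_const _ hw']
  exact ⟨sub_sub_sub_cancel_right _ _ _, sub_le_sub_iff_right _⟩

/-- Potential-based shaping changes the return of every trajectory by exactly
`-Φ s₀`; hence, for any two policies (weight distributions over finitely many trajectories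
all starting at `s₀`), the difference of shaped expected returns equals the difference of the
original expected returns, and a policy maximizes the shaped return iff it maximizes the
original return. -/
theorem pbrs_policy_invariance {S : Type*} (n : ℕ) (γ Rmax Φmax : ℝ)
    (hγ : γ ∈ Set.Ioo (0:ℝ) 1)
    (Φ : S → ℝ) (hΦ : ∀ x, |Φ x| ≤ Φmax)
    (s : Fin n → ℕ → S) (R : Fin n → ℕ → ℝ)
    (hR : ∀ i t, |R i t| ≤ Rmax)
    (s₀ : S) (hs₀ : ∀ i, s i 0 = s₀)
    (J Jsh : Fin n → ℝ)
    (hJ : ∀ i, HasSum (fun t : ℕ => γ ^ t * R i t) (J i))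
    (hJsh : ∀ i, HasSum
      (fun t : ℕ => γ ^ t * (R i t + γ * Φ (s i (t + 1)) - Φ (s i t))) (Jsh i)) :
    (∀ i, Jsh i = J i - Φ s₀) ∧
    (∀ w w' : Fin n → ℝ, (∀ i, 0 ≤ w i) → (∀ i, 0 ≤ w' i) →
      (∑ i, w i) = 1 → (∑ i, w' i) = 1 →
      ((∑ i, w i * Jsh i) - (∑ i, w' i * Jsh i) =
        (∑ i, w i * J i) - (∑ i, w' i * J i)) ∧
      ((∑ i, w' i * Jsh i ≤ ∑ i, w i * Jsh i) ↔
        (∑ i, w' i * J i ≤ ∑ i, w i * J i))) :=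
  pbrs_policy_invariance_general n γ Φmax hγ Φ hΦ s R s₀ hs₀ J Jsh hJ hJsh
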